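/- Let $\lambda_1, \ldots, \lambda_m \in \mathbb{C}^*$ be pairwise distinct, and let $W$ be a subspace of the tensor product module $\mathbf{T}^M = (\otimes_{k=1}^m M(\lambda_k,\alpha_k,\beta_k,\gamma_k)) \otimes V$ that is stable under the actions of $h_i$ and $d_i$ for all sufficiently large $i$. Then for any $g = \sum_{(\mathbf{p},\mathbf{q}) \in E} \mathbf{s}^{\mathbf{p}} \mathbf{t}^{\mathbf{q}} \otimes v_{(\mathbf{p},\mathbf{q})} \in W$ and any $1 \leq k \leq m$, the elements $t_k g$ and $s_k g$ also lie in $W$, as does $\sum_{(\mathbf{p},\mathbf{q}) \in E,\, p_k = P_k} \mathbf{s}^{\mathbf{p} - P_k \omega_k} \mathbf{t}^{\mathbf{q} + \omega_k} \otimes v_{(\mathbf{p},\mathbf{q})}$, where $P_k = \max\{p_k \mid (\mathbf{p},\mathbf{q}) \in E\}$ and $\omega_k$ is the $k$-th standard basis vector. -/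
import Mathlib


open MvPolynomial TensorProduct

/-- `ℂ[s₁,…,s_m,t₁,…,t_m]`: the variable `(k,0)` is `s_k` and `(k,1)` is `t_k`. -/
noncomputable abbrev PP (m : ℕ) : Type := MvPolynomial (Fin m × Fin 2) ℂ

/-- Substitution `g ↦ g(…, s_k - i, t_k + a, …)` acting only on the `k`-th pair of
variables. -/
noncomputable def subm (m : ℕ) (k : Fin m) (i : ℤ) (a : ℂ) : PP m →ₐ[ℂ] PP m :=
  aeval fun w => if w = (k, 0) then X w - MvPolynomial.C (i : ℂ)
    else if w = (k, 1) then X w + MvPolynomial.C a else X w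

/-- The action of `e_i` on the `k`-th tensor factor `M(λ_k,α_k,β_k,γ_k)`, where
`Mt = 0, 1, 2` selects `M = Ω, Δ, Θ` respectively. -/
noncomputable def facE (m : ℕ) (Mt : Fin 3) (lam alp bet : Fin m → ℂ) (k : Fin m) (i : ℤ) :
    PP m →ₗ[ℂ] PP m :=
  if Mt = 0 then ((lam k) ^ i * alp k) • (subm m k i (-2)).toLinearMap
  else if Mt = 1 then (-((lam k) ^ i / alp k)) •
    (LinearMap.mulLeft ℂ ((MvPolynomial.C (1/2 : ℂ) * X (k, 1) + MvPolynomial.C (bet k)) *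
        (MvPolynomial.C (1/2 : ℂ) * X (k, 1) - MvPolynomial.C (bet k) - 1)) ∘ₗ
      (subm m k i (-2)).toLinearMap)
  else ((lam k) ^ i * alp k) •
    (LinearMap.mulLeft ℂ (MvPolynomial.C (1/2 : ℂ) * X (k, 1) + MvPolynomial.C (bet k)) ∘ₗ
      (subm m k i (-2)).toLinearMap)

/-- The action of `f_i` on the `k`-th tensor factor. -/
noncomputable def facF (m : ℕ) (Mt : Fin 3) (lam alp bet : Fin m → ℂ) (k : Fin m) (i : ℤ) :
    PP m →ₗ[ℂ] PP m :=
  if Mt = 0 then (-((lam k) ^ i / alp k)) •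
    (LinearMap.mulLeft ℂ ((MvPolynomial.C (1/2 : ℂ) * X (k, 1) - MvPolynomial.C (bet k)) *
        (MvPolynomial.C (1/2 : ℂ) * X (k, 1) + MvPolynomial.C (bet k) + 1)) ∘ₗ
      (subm m k i 2).toLinearMap)
  else if Mt = 1 then ((lam k) ^ i * alp k) • (subm m k i 2).toLinearMap
  else (-((lam k) ^ i / alp k)) •
    (LinearMap.mulLeft ℂ (MvPolynomial.C (1/2 : ℂ) * X (k, 1) - MvPolynomial.C (bet k)) ∘ₗ
      (subm m k i 2).toLinearMap)

/-- The action of `h_i` on the `k`-th tensor factor. -/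
noncomputable def facH (m : ℕ) (lam : Fin m → ℂ) (k : Fin m) (i : ℤ) : PP m →ₗ[ℂ] PP m :=
  (lam k) ^ i • (LinearMap.mulLeft ℂ (X (k, 1)) ∘ₗ (subm m k i 0).toLinearMap)

/-- The action of `d_i` on the `k`-th tensor factor. -/
noncomputable def facD (m : ℕ) (lam gam : Fin m → ℂ) (k : Fin m) (i : ℤ) :
    PP m →ₗ[ℂ] PP m :=
  (lam k) ^ i • (LinearMap.mulLeft ℂ (X (k, 0) + MvPolynomial.C ((i : ℂ) * gam k)) ∘ₗ
    (subm m k i 0).toLinearMap)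

/-- The diagonal action of `e_i` on `⊗_{k=1}^m M(λ_k,α_k,β_k,γ_k) ⊗ V`. -/
noncomputable def tenE (m : ℕ) (Mt : Fin 3) (lam alp bet : Fin m → ℂ)
    {V : Type*} [AddCommGroup V] [Module ℂ V] (Ev : ℤ → V →ₗ[ℂ] V) (i : ℤ) :
    PP m ⊗[ℂ] V →ₗ[ℂ] PP m ⊗[ℂ] V :=
  TensorProduct.map (∑ k : Fin m, facE m Mt lam alp bet k i) LinearMap.id +
    TensorProduct.map LinearMap.id (Ev i)

/-- The diagonal action of `f_i`. -/
noncomputable def tenF (m : ℕ) (Mt : Fin 3) (lam alp bet : Fin m → ℂ)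
    {V : Type*} [AddCommGroup V] [Module ℂ V] (Fv : ℤ → V →ₗ[ℂ] V) (i : ℤ) :
    PP m ⊗[ℂ] V →ₗ[ℂ] PP m ⊗[ℂ] V :=
  TensorProduct.map (∑ k : Fin m, facF m Mt lam alp bet k i) LinearMap.id +
    TensorProduct.map LinearMap.id (Fv i)

/-- The diagonal action of `h_i`. -/
noncomputable def tenH (m : ℕ) (lam : Fin m → ℂ)
    {V : Type*} [AddCommGroup V] [Module ℂ V] (Hv : ℤ → V →ₗ[ℂ] V) (i : ℤ) :
    PP m ⊗[ℂ] V →ₗ[ℂ] PP m ⊗[ℂ] V :=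
  TensorProduct.map (∑ k : Fin m, facH m lam k i) LinearMap.id +
    TensorProduct.map LinearMap.id (Hv i)

/-- The diagonal action of `d_i`. -/
noncomputable def tenD (m : ℕ) (lam gam : Fin m → ℂ)
    {V : Type*} [AddCommGroup V] [Module ℂ V] (Dv : ℤ → V →ₗ[ℂ] V) (i : ℤ) :
    PP m ⊗[ℂ] V →ₗ[ℂ] PP m ⊗[ℂ] V :=
  TensorProduct.map (∑ k : Fin m, facD m lam gam k i) LinearMap.id +
    TensorProduct.map LinearMap.id (Dv i)

/-- The diagonal action of the central element `C` (it acts by `0` on each polynomial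
factor). -/
noncomputable def tenC (m : ℕ) {V : Type*} [AddCommGroup V] [Module ℂ V]
    (Cv : V →ₗ[ℂ] V) : PP m ⊗[ℂ] V →ₗ[ℂ] PP m ⊗[ℂ] V :=
  TensorProduct.map LinearMap.id Cv

/-- A family of operators on `V` defines an action of the affine-Virasoro algebra of type
`A₁` (all defining bracket relations hold as commutators). -/
def IsAVAction {V : Type*} [AddCommGroup V] [Module ℂ V]
    (Ev Fv Hv Dv : ℤ → V →ₗ[ℂ] V) (Cv : V →ₗ[ℂ] V) : Prop :=
  (∀ i j : ℤ, Ev i ∘ₗ Fv j - Fv j ∘ₗ Ev i =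
    Hv (i + j) + (if i + j = 0 then (i : ℂ) else 0) • Cv) ∧
  (∀ i j : ℤ, Hv i ∘ₗ Ev j - Ev j ∘ₗ Hv i = (2 : ℂ) • Ev (i + j)) ∧
  (∀ i j : ℤ, Hv i ∘ₗ Fv j - Fv j ∘ₗ Hv i = (-2 : ℂ) • Fv (i + j)) ∧
  (∀ i j : ℤ, Dv i ∘ₗ Dv j - Dv j ∘ₗ Dv i = ((j : ℂ) - (i : ℂ)) • Dv (i + j) +
    (if i + j = 0 then ((i : ℂ) ^ 3 - (i : ℂ)) / 12 else 0) • Cv) ∧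
  (∀ i j : ℤ, Dv i ∘ₗ Hv j - Hv j ∘ₗ Dv i = (j : ℂ) • Hv (i + j)) ∧
  (∀ i j : ℤ, Hv i ∘ₗ Hv j - Hv j ∘ₗ Hv i = (if i + j = 0 then (-2 * (i : ℂ)) else 0) • Cv) ∧
  (∀ i j : ℤ, Dv i ∘ₗ Ev j - Ev j ∘ₗ Dv i = (j : ℂ) • Ev (i + j)) ∧
  (∀ i j : ℤ, Dv i ∘ₗ Fv j - Fv j ∘ₗ Dv i = (j : ℂ) • Fv (i + j)) ∧
  (∀ i j : ℤ, Ev i ∘ₗ Ev j = Ev j ∘ₗ Ev i) ∧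
  (∀ i j : ℤ, Fv i ∘ₗ Fv j = Fv j ∘ₗ Fv i) ∧
  (∀ i : ℤ, Ev i ∘ₗ Cv = Cv ∘ₗ Ev i ∧ Fv i ∘ₗ Cv = Cv ∘ₗ Fv i ∧
    Hv i ∘ₗ Cv = Cv ∘ₗ Hv i ∧ Dv i ∘ₗ Cv = Cv ∘ₗ Dv i)

/-- A subspace of `V` stable under all operators. -/
def VStable {V : Type*} [AddCommGroup V] [Module ℂ V]
    (Ev Fv Hv Dv : ℤ → V →ₗ[ℂ] V) (Cv : V →ₗ[ℂ] V) (U : Submodule ℂ V) : Prop :=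
  ∀ i : ℤ, ∀ v ∈ U, Ev i v ∈ U ∧ Fv i v ∈ U ∧ Hv i v ∈ U ∧ Dv i v ∈ U ∧ Cv v ∈ U

/-- `V`, with the given operators, is an irreducible highest weight module of highest weight
`(η, ε, θ)` over the affine-Virasoro algebra of type `A₁`. -/
def IsIrrHW (V : Type*) [AddCommGroup V] [Module ℂ V] (eta eps th : ℂ)
    (Ev Fv Hv Dv : ℤ → V →ₗ[ℂ] V) (Cv : V →ₗ[ℂ] V) : Prop :=
  IsAVAction Ev Fv Hv Dv Cv ∧ Cv = th • LinearMap.id ∧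
  (∃ v0 : V, v0 ≠ 0 ∧
    (∀ i : ℤ, 1 ≤ i → Ev i v0 = 0 ∧ Fv i v0 = 0 ∧ Hv i v0 = 0 ∧ Dv i v0 = 0) ∧
    Ev 0 v0 = 0 ∧ Dv 0 v0 = eta • v0 ∧ Hv 0 v0 = eps • v0 ∧ Cv v0 = th • v0 ∧
    (∀ U : Submodule ℂ V, VStable Ev Fv Hv Dv Cv U → v0 ∈ U → U = ⊤)) ∧
  (∀ U : Submodule ℂ V, VStable Ev Fv Hv Dv Cv U → U = ⊥ ∨ U = ⊤)

/-- The monomial `s^𝐩 t^𝐪 = ∏_k s_k^{p_k} t_k^{q_k}`. -/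
noncomputable def monST (m : ℕ) (p q : Fin m → ℕ) : PP m :=
  ∏ k : Fin m, X (k, 0) ^ p k * X (k, 1) ^ q k


noncomputable def Tpp (μ ν : ℂ) (Q : (Polynomial ℂ)) : (Polynomial ℂ) :=
  ν • Q.comp (Polynomial.X + Polynomial.C 1) - μ • Q

lemma Tpp_zero (μ ν : ℂ) : Tpp μ ν 0 = 0 := by simp [Tpp]

lemma Tpp_eval (μ ν : ℂ) (Q : (Polynomial ℂ)) (x : ℂ) :
    (Tpp μ ν Q).eval x = ν * Q.eval (x + 1) - μ * Q.eval x := by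
  simp [Tpp, Polynomial.eval_comp]

lemma comp1_degree (Q : (Polynomial ℂ)) : (Q.comp (Polynomial.X + Polynomial.C 1)).degree = Q.degree := by
  rcases eq_or_ne Q 0 with rfl | hQ
  · simp
  · have h1 : (Polynomial.X + Polynomial.C (1:ℂ)).natDegree = 1 := Polynomial.natDegree_X_add_C 1
    have hlc : (Q.comp (Polynomial.X + Polynomial.C 1)).leadingCoeff = Q.leadingCoeff := by
      rw [Polynomial.leadingCoeff_comp (by rw [h1]; norm_num), Polynomial.leadingCoeff_X_add_C, one_pow, mul_one]
    have hne : Q.comp (Polynomial.X + Polynomial.C 1) ≠ 0 := fun h => hQ (Polynomial.leadingCoeff_eq_zero.mp (by rw [← hlc, h]; simp))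
    rw [Polynomial.degree_eq_natDegree hne, Polynomial.degree_eq_natDegree hQ, Polynomial.natDegree_comp, h1, mul_one]

lemma comp1_leadingCoeff (Q : (Polynomial ℂ)) : (Q.comp (Polynomial.X + Polynomial.C 1)).leadingCoeff = Q.leadingCoeff := by
  rcases eq_or_ne Q 0 with rfl | hQ
  · simp
  · rw [Polynomial.leadingCoeff_comp (by rw [Polynomial.natDegree_X_add_C]; norm_num), Polynomial.leadingCoeff_X_add_C, one_pow,
      mul_one]

lemma Tpp_degree_lt (μ : ℂ) (hμ : μ ≠ 0) (Q : (Polynomial ℂ)) (hQ : Q ≠ 0) :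
    (Tpp μ μ Q).degree < Q.degree := by
  have hc : Q.comp (Polynomial.X + Polynomial.C 1) ≠ 0 := by
    intro h
    have := comp1_degree Q
    rw [h, Polynomial.degree_zero] at this
    exact hQ (Polynomial.degree_eq_bot.mp this.symm)
  have h1 : (μ • Q.comp (Polynomial.X + Polynomial.C 1)) ≠ 0 := smul_ne_zero hμ hc
  have hd : Polynomial.degree (μ • Q.comp (Polynomial.X + Polynomial.C 1)) = Polynomial.degree (μ • Q) := by
    rw [Polynomial.smul_eq_C_mul, Polynomial.smul_eq_C_mul, Polynomial.degree_C_mul hμ, Polynomial.degree_C_mul hμ, comp1_degree]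
  have hl : Polynomial.leadingCoeff (μ • Q.comp (Polynomial.X + Polynomial.C 1)) = Polynomial.leadingCoeff (μ • Q) := by
    rw [Polynomial.smul_eq_C_mul, Polynomial.smul_eq_C_mul, Polynomial.leadingCoeff_mul, Polynomial.leadingCoeff_mul,
      comp1_leadingCoeff]
  calc (Tpp μ μ Q).degree < Polynomial.degree (μ • Q.comp (Polynomial.X + Polynomial.C 1)) := Polynomial.degree_sub_lt hd h1 hl
    _ = Q.degree := by rw [Polynomial.smul_eq_C_mul, Polynomial.degree_C_mul hμ, comp1_degree]

lemma Tpp_inj (μ ν : ℂ) (hν : ν ≠ 0) (hne : ν ≠ μ) (Q : (Polynomial ℂ)) (h : Tpp μ ν Q = 0) : Q = 0 := by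
  by_contra hQ
  have heq : ν • Q.comp (Polynomial.X + Polynomial.C 1) = μ • Q := by
    have := sub_eq_zero.mp h
    simpa [Tpp, sub_eq_zero] using h
  have hcoeff := congrArg (fun p => p.coeff Q.natDegree) heq
  simp only [Polynomial.coeff_smul, smul_eq_mul] at hcoeff
  have hcn : (Q.comp (Polynomial.X + Polynomial.C 1)).coeff Q.natDegree = Q.leadingCoeff := by
    have hdeg : (Q.comp (Polynomial.X + Polynomial.C 1)).natDegree = Q.natDegree := by
      rw [Polynomial.natDegree_comp, Polynomial.natDegree_X_add_C, mul_one]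
    rw [← hdeg, ← Polynomial.leadingCoeff, comp1_leadingCoeff]
  rw [hcn, ← Polynomial.leadingCoeff] at hcoeff
  have hlc : Q.leadingCoeff ≠ 0 := Polynomial.leadingCoeff_ne_zero.mpr hQ
  exact hne (mul_right_cancel₀ hlc (by rw [hcoeff]))

lemma Tpp_iter_zero (μ : ℂ) (hμ : μ ≠ 0) : ∀ n (Q : (Polynomial ℂ)), Q.natDegree < n →
    (Tpp μ μ)^[n] Q = 0 := by
  intro n
  induction n with
  | zero => intro Q h; omega
  | succ n ih =>
    intro Q h
    rw [Function.iterate_succ_apply]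
    rcases eq_or_ne Q 0 with rfl | hQ
    · rw [Tpp_zero]; exact Function.iterate_fixed (Tpp_zero μ μ) n
    rcases eq_or_ne (Tpp μ μ Q) 0 with h0 | h0
    · rw [h0]; exact Function.iterate_fixed (Tpp_zero μ μ) n
    · exact ih _ (lt_of_lt_of_le (Polynomial.natDegree_lt_natDegree h0 (Tpp_degree_lt μ hμ Q hQ))
        (Nat.lt_succ_iff.mp h))

lemma Tpp_iter_inj (μ ν : ℂ) (hν : ν ≠ 0) (hne : ν ≠ μ) (n : ℕ) (Q : (Polynomial ℂ))
    (h : (Tpp μ ν)^[n] Q = 0) : Q = 0 := by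
  induction n generalizing Q with
  | zero => exact h
  | succ n ih => exact Tpp_inj μ ν hν hne Q (ih _ (by rwa [← Function.iterate_succ_apply]))

lemma expPoly_indep {ι : Type*} [DecidableEq ι] (lam : ι → ℂ) (hlam0 : ∀ k, lam k ≠ 0)
    (hinj : Function.Injective lam) (I : ℤ) (s : Finset ι) :
    ∀ (P : ι → (Polynomial ℂ)),
      (∀ i : ℤ, I ≤ i → ∑ k ∈ s, lam k ^ i * (P k).eval (i : ℂ) = 0) → ∀ k ∈ s, P k = 0 := by
  induction s using Finset.induction_on with
  | empty => simp
  | @insert a s ha ih =>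
    intro P hP
    set Φ : (ι → (Polynomial ℂ)) → (ι → (Polynomial ℂ)) := fun Q k => Tpp (lam a) (lam k) (Q k) with hΦ
    have iter_comp : ∀ n (Q : ι → (Polynomial ℂ)) k, (Φ^[n] Q) k = (Tpp (lam a) (lam k))^[n] (Q k) := by
      intro n
      induction n with
      | zero => intro Q k; rfl
      | succ n ihn =>
        intro Q k
        rw [Function.iterate_succ_apply, Function.iterate_succ_apply, ihn]
    have step : ∀ (Q : ι → (Polynomial ℂ)),
        (∀ i : ℤ, I ≤ i → ∑ k ∈ insert a s, lam k ^ i * (Q k).eval (i:ℂ) = 0) →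
        (∀ i : ℤ, I ≤ i → ∑ k ∈ insert a s, lam k ^ i * (Φ Q k).eval (i:ℂ) = 0) := by
      intro Q hQ i hi
      have h1 := hQ (i+1) (by omega)
      have h2 := hQ i hi
      have heq : ∑ k ∈ insert a s, lam k ^ i * (Φ Q k).eval (i:ℂ)
          = ∑ k ∈ insert a s, (lam k ^ (i+1) * (Q k).eval ((i+1 : ℤ):ℂ)
            - lam a * (lam k ^ i * (Q k).eval (i:ℂ))) := by
        refine Finset.sum_congr rfl fun k _ => ?_
        simp only [hΦ, Tpp_eval]
        push_cast
        rw [zpow_add_one₀ (hlam0 k)]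
        ring
      rw [heq, Finset.sum_sub_distrib, h1, ← Finset.mul_sum, h2]
      ring
    have stepn : ∀ n,
        ∀ i : ℤ, I ≤ i → ∑ k ∈ insert a s, lam k ^ i * ((Φ^[n] P) k).eval (i:ℂ) = 0 := by
      intro n
      induction n with
      | zero => exact hP
      | succ n ihn =>
        intro i hi
        have h2 := step (Φ^[n] P) ihn i hi
        simp only [Function.iterate_succ_apply']
        exact h2
    set N := (P a).natDegree + 1 with hN
    have hPa0 : (Φ^[N] P) a = 0 := by
      rw [iter_comp]
      exact Tpp_iter_zero (lam a) (hlam0 a) N (P a) (Nat.lt_succ_self _)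
    have hs0 : ∀ k ∈ s, (Φ^[N] P) k = 0 := by
      apply ih
      intro i hi
      have := stepn N i hi
      rwa [Finset.sum_insert ha, hPa0, Polynomial.eval_zero, mul_zero, zero_add] at this
    have hPk : ∀ k ∈ s, P k = 0 := by
      intro k hk
      have hka : k ≠ a := fun h => ha (h ▸ hk)
      refine Tpp_iter_inj (lam a) (lam k) (hlam0 k) (fun h => hka (hinj h)) N (P k) ?_
      rw [← iter_comp]
      exact hs0 k hk
    have hPa : P a = 0 := by
      apply Polynomial.eq_zero_of_infinite_isRoot
      apply Set.infinite_of_injective_forall_mem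
        (f := fun n : ℕ => ((I + n : ℤ) : ℂ))
      · intro n1 n2 h
        dsimp only at h
        have : (I + n1 : ℤ) = (I + n2 : ℤ) := by exact_mod_cast h
        omega
      · intro n
        have := hP (I + n) (by omega)
        rw [Finset.sum_insert ha] at this
        have hz : ∑ k ∈ s, lam k ^ (I + (n:ℤ)) * (P k).eval ((I + (n:ℤ) : ℤ):ℂ) = 0 := by
          refine Finset.sum_eq_zero fun k hk => ?_
          rw [hPk k hk, Polynomial.eval_zero, mul_zero]
        rw [hz, add_zero] at this
        have := mul_eq_zero.mp this
        rcases this with h | h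
        · exact absurd h (zpow_ne_zero _ (hlam0 a))
        · exact h
    intro k hk
    rcases Finset.mem_insert.mp hk with rfl | hk
    · exact hPa
    · exact hPk k hk

lemma span_exp_top (mm n : ℕ) (lam : Fin mm → ℂ) (hlam0 : ∀ k, lam k ≠ 0)
    (hinj : Function.Injective lam) (I : ℤ) :
    Submodule.span ℂ {w : Fin mm × Fin n → ℂ |
      ∃ i : ℤ, I ≤ i ∧ w = fun t => lam t.1 ^ i * (i : ℂ) ^ (t.2 : ℕ)} = ⊤ := by
  by_contra hne
  set p := Submodule.span ℂ {w : Fin mm × Fin n → ℂ |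
      ∃ i : ℤ, I ≤ i ∧ w = fun t => lam t.1 ^ i * (i : ℂ) ^ (t.2 : ℕ)} with hp
  obtain ⟨x, hx⟩ : ∃ x, x ∉ p := by
    by_contra h
    push_neg at h
    exact hne (Submodule.eq_top_iff'.mpr h)
  have hπx : Submodule.Quotient.mk (p := p) x ≠ 0 := by
    rw [Ne, Submodule.Quotient.mk_eq_zero]
    exact hx
  obtain ⟨φ', hφ'⟩ : ∃ φ' : Module.Dual ℂ ((Fin mm × Fin n → ℂ) ⧸ p),
      φ' (Submodule.Quotient.mk x) ≠ 0 := by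
    by_contra h
    push_neg at h
    exact hπx ((Module.forall_dual_apply_eq_zero_iff ℂ _).mp h)
  set φ : (Fin mm × Fin n → ℂ) →ₗ[ℂ] ℂ := φ' ∘ₗ p.mkQ with hφdef
  have hφp : ∀ y ∈ p, φ y = 0 := by
    intro y hy
    simp only [hφdef, LinearMap.comp_apply, Submodule.mkQ_apply]
    rw [(Submodule.Quotient.mk_eq_zero p).mpr hy, map_zero]
  set c : Fin mm × Fin n → ℂ := fun t => φ (fun j => if t = j then 1 else 0) with hc
  have hφeval : ∀ w : Fin mm × Fin n → ℂ, φ w = ∑ t : Fin mm × Fin n, w t * c t := by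
    intro w
    conv_lhs => rw [pi_eq_sum_univ w]
    rw [map_sum]
    refine Finset.sum_congr rfl fun t _ => ?_
    rw [map_smul, smul_eq_mul]
  set Pc : Fin mm → Polynomial ℂ :=
    fun k => ∑ j : Fin n, Polynomial.monomial (j : ℕ) (c (k, j)) with hPc
  have hvanish : ∀ i : ℤ, I ≤ i → ∑ k : Fin mm, lam k ^ i * (Pc k).eval (i : ℂ) = 0 := by
    intro i hi
    have hmem : (fun t : Fin mm × Fin n => lam t.1 ^ i * (i : ℂ) ^ (t.2 : ℕ)) ∈ p :=
      Submodule.subset_span ⟨i, hi, rfl⟩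
    have h0 := hφp _ hmem
    rw [hφeval] at h0
    rw [← h0, Fintype.sum_prod_type]
    refine Finset.sum_congr rfl fun k _ => ?_
    rw [hPc, Polynomial.eval_finset_sum, Finset.mul_sum]
    refine Finset.sum_congr rfl fun j _ => ?_
    rw [Polynomial.eval_monomial]
    ring
  have hPc0 : ∀ k, Pc k = 0 := fun k =>
    expPoly_indep lam hlam0 hinj I Finset.univ Pc
      (fun i hi => by simpa using hvanish i hi) k (Finset.mem_univ k)
  have hc0 : ∀ t, c t = 0 := by
    rintro ⟨k, j⟩
    have := congrArg (fun P => Polynomial.coeff P (j : ℕ)) (hPc0 k)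
    simp only [hPc, Polynomial.finset_sum_coeff, Polynomial.coeff_monomial,
      Polynomial.coeff_zero] at this
    rwa [Finset.sum_eq_single j (fun j' _ hj' => by
        rw [if_neg (fun h => hj' (Fin.val_injective h))])
      (fun h => absurd (Finset.mem_univ j) h), if_pos rfl] at this
  have : φ x = 0 := by
    rw [hφeval]
    refine Finset.sum_eq_zero fun t _ => by rw [hc0, mul_zero]
  exact hφ' this

lemma extract_mem {M : Type*} [AddCommGroup M] [Module ℂ M] (mm n : ℕ)
    (lam : Fin mm → ℂ) (hlam0 : ∀ k, lam k ≠ 0) (hinj : Function.Injective lam)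
    (I : ℤ) (W : Submodule ℂ M) (x : Fin mm × Fin n → M)
    (hmem : ∀ i : ℤ, I ≤ i →
      (∑ t : Fin mm × Fin n, (lam t.1 ^ i * (i : ℂ) ^ (t.2 : ℕ)) • x t) ∈ W) :
    ∀ t, x t ∈ W := by
  intro t0
  have htop := span_exp_top mm n lam hlam0 hinj I
  have hmem' : (fun t => if t = t0 then (1:ℂ) else 0) ∈ Submodule.span ℂ
      {w : Fin mm × Fin n → ℂ |
        ∃ i : ℤ, I ≤ i ∧ w = fun t => lam t.1 ^ i * (i : ℂ) ^ (t.2 : ℕ)} := by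
    rw [htop]; exact Submodule.mem_top
  rcases Submodule.mem_span_set'.mp hmem' with ⟨r, f, g, hsum⟩
  have hg : ∀ r' : Fin r, ∃ i : ℤ, I ≤ i ∧
      (g r' : Fin mm × Fin n → ℂ) = fun t => lam t.1 ^ i * (i : ℂ) ^ (t.2 : ℕ) :=
    fun r' => (g r').2
  choose iF hiF hgF using hg
  have key : x t0 = ∑ r' : Fin r, f r' •
      ∑ t : Fin mm × Fin n, (lam t.1 ^ iF r' * ((iF r' : ℤ) : ℂ) ^ (t.2 : ℕ)) • x t := by
    have h1 : ∀ t, (∑ r' : Fin r, f r' * (g r' : Fin mm × Fin n → ℂ) t)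
        = if t = t0 then (1:ℂ) else 0 := by
      intro t
      have h2 := congrFun hsum t
      simpa [Finset.sum_apply] using h2
    calc x t0 = ∑ t : Fin mm × Fin n, (if t = t0 then (1:ℂ) else 0) • x t := by
          rw [show (∑ t : Fin mm × Fin n, (if t = t0 then (1:ℂ) else 0) • x t)
              = ∑ t : Fin mm × Fin n, (if t = t0 then x t else 0) from
            Finset.sum_congr rfl fun t _ => by split <;> simp]
          rw [Finset.sum_ite_eq' Finset.univ t0 x, if_pos (Finset.mem_univ t0)]
      _ = ∑ t : Fin mm × Fin n, (∑ r' : Fin r, f r' * (g r' : Fin mm × Fin n → ℂ) t) • x t :=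
          Finset.sum_congr rfl fun t _ => by rw [h1]
      _ = ∑ t : Fin mm × Fin n, ∑ r' : Fin r, (f r' * (g r' : Fin mm × Fin n → ℂ) t) • x t :=
          Finset.sum_congr rfl fun t _ => by rw [Finset.sum_smul]
      _ = ∑ r' : Fin r, ∑ t : Fin mm × Fin n, (f r' * (g r' : Fin mm × Fin n → ℂ) t) • x t :=
          Finset.sum_comm
      _ = ∑ r' : Fin r, f r' • ∑ t : Fin mm × Fin n, ((g r' : Fin mm × Fin n → ℂ) t) • x t :=
          Finset.sum_congr rfl fun r' _ => by
            rw [Finset.smul_sum]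
            exact Finset.sum_congr rfl fun t _ => by rw [smul_smul]
      _ = ∑ r' : Fin r, f r' •
          ∑ t : Fin mm × Fin n, (lam t.1 ^ iF r' * ((iF r' : ℤ) : ℂ) ^ (t.2 : ℕ)) • x t :=
          Finset.sum_congr rfl fun r' _ => by rw [hgF r']
  rw [key]
  exact Submodule.sum_mem _ fun r' _ => Submodule.smul_mem _ _ (hmem _ (hiF r'))

-- ### Auxiliary: MvPolynomial computations

noncomputable def restP (m : ℕ) (k : Fin m) (p q : Fin m → ℕ) : PP m :=
  ∏ l ∈ Finset.univ.erase k, ((X (l, 0) : PP m) ^ p l * X (l, 1) ^ q l)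

lemma monST_eq (m : ℕ) (k : Fin m) (p q : Fin m → ℕ) :
    monST m p q = X (k, 0) ^ p k * X (k, 1) ^ q k * restP m k p q := by
  rw [monST, restP, ← Finset.mul_prod_erase _ _ (Finset.mem_univ k)]

lemma restP_update (m : ℕ) (k : Fin m) (p q : Fin m → ℕ) (a b : ℕ) :
    restP m k (Function.update p k a) (Function.update q k b) = restP m k p q := by
  refine Finset.prod_congr rfl fun l hl => ?_
  have hlk : l ≠ k := Finset.ne_of_mem_erase hl
  rw [Function.update_of_ne hlk, Function.update_of_ne hlk]

lemma monST_update (m : ℕ) (k : Fin m) (p q : Fin m → ℕ) (a b : ℕ) :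
    monST m (Function.update p k a) (Function.update q k b)
      = X (k, 0) ^ a * X (k, 1) ^ b * restP m k p q := by
  rw [monST_eq m k, Function.update_self, Function.update_self, restP_update]

lemma subm_X0 (m : ℕ) (k : Fin m) (i : ℤ) (a : ℂ) :
    subm m k i a (X (k, 0)) = X (k, 0) - MvPolynomial.C (i : ℂ) := by
  rw [subm, aeval_X, if_pos rfl]

lemma subm_X1 (m : ℕ) (k : Fin m) (i : ℤ) (a : ℂ) :
    subm m k i a (X (k, 1)) = X (k, 1) + MvPolynomial.C a := by
  rw [subm, aeval_X, if_neg (by simp), if_pos rfl]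

lemma subm_X_other (m : ℕ) (k l : Fin m) (hlk : l ≠ k) (b : Fin 2) (i : ℤ) (a : ℂ) :
    subm m k i a (X (l, b)) = X (l, b) := by
  rw [subm, aeval_X, if_neg (by simp [hlk]), if_neg (by simp [hlk])]

lemma subm_restP (m : ℕ) (k : Fin m) (i : ℤ) (a : ℂ) (p q : Fin m → ℕ) :
    subm m k i a (restP m k p q) = restP m k p q := by
  rw [restP, map_prod]
  refine Finset.prod_congr rfl fun l hl => ?_
  have hlk : l ≠ k := Finset.ne_of_mem_erase hl
  rw [map_mul, map_pow, map_pow, subm_X_other m k l hlk, subm_X_other m k l hlk]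

lemma subm_monST (m : ℕ) (k : Fin m) (i : ℤ) (a : ℂ) (p q : Fin m → ℕ) :
    subm m k i a (monST m p q)
      = (X (k, 0) - MvPolynomial.C (i : ℂ)) ^ p k * (X (k, 1) + MvPolynomial.C a) ^ q k
        * restP m k p q := by
  rw [monST_eq m k, map_mul, map_mul, map_pow, map_pow, subm_X0, subm_X1, subm_restP]

noncomputable def hCf (p j : ℕ) : ℂ := (-1) ^ j * (p.choose j : ℂ)

noncomputable def dCf (γ : ℂ) (p j : ℕ) : ℂ :=
  hCf p j + (if j = 0 then 0 else γ * hCf p (j - 1))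

lemma binom_expand (m : ℕ) (x : PP m) (e : ℂ) (p n : ℕ) (hpn : p ≤ n) :
    (x - MvPolynomial.C e) ^ p
      = ∑ j ∈ Finset.range (n + 1), (hCf p j * e ^ j) • x ^ (p - j) := by
  have h1 : (x - MvPolynomial.C e) ^ p
      = ∑ j ∈ Finset.range (p + 1), (hCf p j * e ^ j) • x ^ (p - j) := by
    rw [sub_eq_add_neg, add_pow, ← Finset.sum_range_reflect]
    refine Finset.sum_congr rfl fun j hj => ?_
    have hjp : j ≤ p := by
      have := Finset.mem_range.mp hj; omega
    have h2 : p + 1 - 1 - j = p - j := by omega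
    rw [h2, Nat.sub_sub_self hjp, Nat.choose_symm hjp, hCf, MvPolynomial.smul_eq_C_mul]
    simp only [map_mul, map_pow, map_neg, map_one, map_natCast]
    ring
  rw [h1]
  refine Finset.sum_subset (by intro j hj; simp_all; omega) fun j _ hj => ?_
  have : p < j := by simp at hj ⊢; omega
  rw [hCf, Nat.choose_eq_zero_of_lt this]
  simp

lemma dbinom_expand (m : ℕ) (x : PP m) (e γ : ℂ) (p n : ℕ) (hpn : p ≤ n) :
    (x + MvPolynomial.C (e * γ)) * (x - MvPolynomial.C e) ^ p
      = ∑ j ∈ Finset.range (n + 2), (dCf γ p j * e ^ j) • x ^ (p + 1 - j) := by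
  have hx : x * (x - MvPolynomial.C e) ^ p
      = ∑ j ∈ Finset.range (n + 2), (hCf p j * e ^ j) • x ^ (p + 1 - j) := by
    rw [binom_expand m x e p (n + 1) (by omega), Finset.mul_sum]
    refine Finset.sum_congr rfl fun j _ => ?_
    rw [mul_smul_comm]
    rcases le_or_gt j p with h | h
    · congr 1
      rw [← pow_succ']
      congr 1
      omega
    · rw [hCf, Nat.choose_eq_zero_of_lt h]
      simp
  have hc : (MvPolynomial.C (e * γ) : PP m) * (x - MvPolynomial.C e) ^ p
      = ∑ j ∈ Finset.range (n + 2),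
          ((if j = 0 then 0 else γ * hCf p (j - 1)) * e ^ j) • x ^ (p + 1 - j) := by
    rw [Finset.sum_range_succ', binom_expand m x e p n hpn, Finset.mul_sum]
    rw [if_pos rfl, zero_mul, zero_smul, add_zero]
    refine Finset.sum_congr rfl fun j _ => ?_
    rw [if_neg (Nat.succ_ne_zero j), Nat.add_sub_cancel]
    have h3 : p + 1 - (j + 1) = p - j := by omega
    rw [h3, MvPolynomial.smul_eq_C_mul, MvPolynomial.smul_eq_C_mul]
    simp only [map_mul, map_pow]
    ring
  rw [add_mul, hx, hc, ← Finset.sum_add_distrib]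
  refine Finset.sum_congr rfl fun j _ => ?_
  rw [dCf, ← add_smul]
  ring_nf

lemma facH_monST (m : ℕ) (lam : Fin m → ℂ) (k : Fin m) (i : ℤ) (p q : Fin m → ℕ)
    (n : ℕ) (hn : p k ≤ n) :
    facH m lam k i (monST m p q)
      = ∑ j ∈ Finset.range (n + 1), (lam k ^ i * (i : ℂ) ^ j * hCf (p k) j) •
          monST m (Function.update p k (p k - j)) (Function.update q k (q k + 1)) := by
  rw [facH]
  simp only [LinearMap.smul_apply, LinearMap.comp_apply, AlgHom.toLinearMap_apply,
    LinearMap.mulLeft_apply]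
  rw [subm_monST, map_zero, add_zero, binom_expand m _ _ _ n hn]
  simp only [MvPolynomial.smul_eq_C_mul, Finset.mul_sum, Finset.sum_mul]
  refine Finset.sum_congr rfl fun j _ => ?_
  rw [monST_update]
  simp only [map_mul]
  rw [pow_succ]
  ring

lemma facD_monST (m : ℕ) (lam gam : Fin m → ℂ) (k : Fin m) (i : ℤ) (p q : Fin m → ℕ)
    (n : ℕ) (hn : p k ≤ n) :
    facD m lam gam k i (monST m p q)
      = ∑ j ∈ Finset.range (n + 2), (lam k ^ i * (i : ℂ) ^ j * dCf (gam k) (p k) j) •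
          monST m (Function.update p k (p k + 1 - j)) q := by
  rw [facD]
  simp only [LinearMap.smul_apply, LinearMap.comp_apply, AlgHom.toLinearMap_apply,
    LinearMap.mulLeft_apply]
  rw [subm_monST, map_zero, add_zero]
  have hassoc : (X (k, 0) + MvPolynomial.C ((i : ℂ) * gam k)) *
      ((X (k, 0) - MvPolynomial.C (i : ℂ)) ^ p k * X (k, 1) ^ q k * restP m k p q)
      = ((X (k, 0) + MvPolynomial.C ((i : ℂ) * gam k)) *
        (X (k, 0) - MvPolynomial.C (i : ℂ)) ^ p k) * (X (k, 1) ^ q k * restP m k p q) := by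
    ring
  rw [hassoc, dbinom_expand m _ _ _ _ n hn]
  simp only [MvPolynomial.smul_eq_C_mul, Finset.mul_sum, Finset.sum_mul]
  refine Finset.sum_congr rfl fun j _ => ?_
  have hq : monST m (Function.update p k (p k + 1 - j)) q
      = X (k, 0) ^ (p k + 1 - j) * X (k, 1) ^ q k * restP m k p q := by
    conv_lhs => rw [← Function.update_eq_self k q]
    rw [monST_update]
  rw [hq]
  simp only [map_mul]
  ring

/-- Proposition 3.2 of the paper: if `W` is a subspace of the tensor product module stable
under `h_i` and `d_i` for all sufficiently large `i`, and
`g = ∑_{(𝐩,𝐪) ∈ E} s^𝐩 t^𝐪 ⊗ v_{(𝐩,𝐪)} ∈ W`, then `t_k g ∈ W`, `s_k g ∈ W`, and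
`∑_{(𝐩,𝐪) ∈ E, p_k = P_k} s^{𝐩 - P_k ω_k} t^{𝐪 + ω_k} ⊗ v_{(𝐩,𝐪)} ∈ W`. -/
theorem stmt14 (m : ℕ) (hm : 0 < m) (lam gam : Fin m → ℂ)
    (hlam0 : ∀ k, lam k ≠ 0) (hinj : Function.Injective lam)
    (V : Type*) [AddCommGroup V] [Module ℂ V] (Hv Dv : ℤ → V →ₗ[ℂ] V)
    (E : Finset ((Fin m → ℕ) × (Fin m → ℕ))) (v : ((Fin m → ℕ) × (Fin m → ℕ)) → V)
    (hvan : ∃ I : ℤ, ∀ i : ℤ, I ≤ i → ∀ pq ∈ E, Hv i (v pq) = 0 ∧ Dv i (v pq) = 0)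
    (W : Submodule ℂ (PP m ⊗[ℂ] V))
    (hstab : ∃ I : ℤ, ∀ i : ℤ, I ≤ i → ∀ x ∈ W,
      tenH m lam Hv i x ∈ W ∧ tenD m lam gam Dv i x ∈ W)
    (hg : (∑ pq ∈ E, monST m pq.1 pq.2 ⊗ₜ[ℂ] v pq) ∈ W) (k : Fin m) :
    (∑ pq ∈ E, monST m pq.1 (Function.update pq.2 k (pq.2 k + 1)) ⊗ₜ[ℂ] v pq) ∈ W ∧
    (∑ pq ∈ E, monST m (Function.update pq.1 k (pq.1 k + 1)) pq.2 ⊗ₜ[ℂ] v pq) ∈ W ∧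
    (∑ pq ∈ E.filter (fun pq => pq.1 k = E.sup (fun pq' => pq'.1 k)),
      monST m (Function.update pq.1 k 0) (Function.update pq.2 k (pq.2 k + 1)) ⊗ₜ[ℂ] v pq)
      ∈ W := by
  classical
  obtain ⟨Iv, hIv⟩ := hvan
  obtain ⟨Is, hIs⟩ := hstab
  set I0 : ℤ := max Iv Is with hI0
  set N : ℕ := E.sup (fun pq => Finset.univ.sup pq.1) with hNdef
  have hbound : ∀ pq ∈ E, ∀ l, pq.1 l ≤ N := by
    intro pq hpq l
    calc pq.1 l ≤ Finset.univ.sup pq.1 := Finset.le_sup (Finset.mem_univ l)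
      _ ≤ N := Finset.le_sup (f := fun pq : (Fin m → ℕ) × (Fin m → ℕ) => Finset.univ.sup pq.1) hpq
  set g : PP m ⊗[ℂ] V := ∑ pq ∈ E, monST m pq.1 pq.2 ⊗ₜ[ℂ] v pq with hgdef
  set xH : Fin m → ℕ → PP m ⊗[ℂ] V := fun k' j => ∑ pq ∈ E, hCf (pq.1 k') j •
    (monST m (Function.update pq.1 k' (pq.1 k' - j))
      (Function.update pq.2 k' (pq.2 k' + 1)) ⊗ₜ[ℂ] v pq) with hxH
  set xD : Fin m → ℕ → PP m ⊗[ℂ] V := fun k' j => ∑ pq ∈ E, dCf (gam k') (pq.1 k') j •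
    (monST m (Function.update pq.1 k' (pq.1 k' + 1 - j)) pq.2 ⊗ₜ[ℂ] v pq) with hxD
  have hHsum : ∀ i : ℤ, I0 ≤ i → tenH m lam Hv i g
      = ∑ t : Fin m × Fin (N+1), (lam t.1 ^ i * (i:ℂ) ^ (t.2 : ℕ)) • xH t.1 (t.2 : ℕ) := by
    intro i hi
    rw [tenH, LinearMap.add_apply]
    have hz : TensorProduct.map LinearMap.id (Hv i) g = 0 := by
      rw [hgdef, map_sum]
      refine Finset.sum_eq_zero fun pq hpq => ?_
      rw [TensorProduct.map_tmul, (hIv i (le_trans (le_max_left _ _) hi) pq hpq).1, tmul_zero]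
    rw [hz, add_zero, hgdef, map_sum]
    have h1 : ∀ pq ∈ E, TensorProduct.map (∑ k' : Fin m, facH m lam k' i) LinearMap.id
        (monST m pq.1 pq.2 ⊗ₜ[ℂ] v pq)
        = ∑ k' : Fin m, ∑ j ∈ Finset.range (N+1), (lam k' ^ i * (i:ℂ)^j) •
            (hCf (pq.1 k') j • (monST m (Function.update pq.1 k' (pq.1 k' - j))
              (Function.update pq.2 k' (pq.2 k' + 1)) ⊗ₜ[ℂ] v pq)) := by
      intro pq hpq
      rw [TensorProduct.map_tmul, LinearMap.sum_apply, TensorProduct.sum_tmul]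
      simp only [LinearMap.id_coe, id_eq]
      refine Finset.sum_congr rfl fun k' _ => ?_
      rw [facH_monST m lam k' i pq.1 pq.2 N (hbound pq hpq k'), TensorProduct.sum_tmul]
      refine Finset.sum_congr rfl fun j _ => ?_
      rw [← TensorProduct.smul_tmul', smul_smul]
    rw [Finset.sum_congr rfl h1, Fintype.sum_prod_type, Finset.sum_comm]
    refine Finset.sum_congr rfl fun k' _ => ?_
    rw [Finset.sum_comm,
      Fin.sum_univ_eq_sum_range (fun j => (lam k' ^ i * (i:ℂ)^j) • xH k' j) (N+1)]
    refine Finset.sum_congr rfl fun j _ => ?_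
    simp only [hxH]
    rw [Finset.smul_sum]
  have hDsum : ∀ i : ℤ, I0 ≤ i → tenD m lam gam Dv i g
      = ∑ t : Fin m × Fin (N+2), (lam t.1 ^ i * (i:ℂ) ^ (t.2 : ℕ)) • xD t.1 (t.2 : ℕ) := by
    intro i hi
    rw [tenD, LinearMap.add_apply]
    have hz : TensorProduct.map LinearMap.id (Dv i) g = 0 := by
      rw [hgdef, map_sum]
      refine Finset.sum_eq_zero fun pq hpq => ?_
      rw [TensorProduct.map_tmul, (hIv i (le_trans (le_max_left _ _) hi) pq hpq).2, tmul_zero]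
    rw [hz, add_zero, hgdef, map_sum]
    have h1 : ∀ pq ∈ E, TensorProduct.map (∑ k' : Fin m, facD m lam gam k' i) LinearMap.id
        (monST m pq.1 pq.2 ⊗ₜ[ℂ] v pq)
        = ∑ k' : Fin m, ∑ j ∈ Finset.range (N+2), (lam k' ^ i * (i:ℂ)^j) •
            (dCf (gam k') (pq.1 k') j •
              (monST m (Function.update pq.1 k' (pq.1 k' + 1 - j)) pq.2 ⊗ₜ[ℂ] v pq)) := by
      intro pq hpq
      rw [TensorProduct.map_tmul, LinearMap.sum_apply, TensorProduct.sum_tmul]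
      simp only [LinearMap.id_coe, id_eq]
      refine Finset.sum_congr rfl fun k' _ => ?_
      rw [facD_monST m lam gam k' i pq.1 pq.2 N (hbound pq hpq k'), TensorProduct.sum_tmul]
      refine Finset.sum_congr rfl fun j _ => ?_
      rw [← TensorProduct.smul_tmul', smul_smul]
    rw [Finset.sum_congr rfl h1, Fintype.sum_prod_type, Finset.sum_comm]
    refine Finset.sum_congr rfl fun k' _ => ?_
    rw [Finset.sum_comm,
      Fin.sum_univ_eq_sum_range (fun j => (lam k' ^ i * (i:ℂ)^j) • xD k' j) (N+2)]
    refine Finset.sum_congr rfl fun j _ => ?_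
    simp only [hxD]
    rw [Finset.smul_sum]
  have hgW : g ∈ W := hg
  have hxHW : ∀ t : Fin m × Fin (N+1), xH t.1 (t.2 : ℕ) ∈ W := by
    refine extract_mem m (N+1) lam hlam0 hinj I0 W (fun t => xH t.1 (t.2 : ℕ)) ?_
    intro i hi
    rw [← hHsum i hi]
    exact (hIs i (le_trans (le_max_right _ _) hi) g hgW).1
  have hxDW : ∀ t : Fin m × Fin (N+2), xD t.1 (t.2 : ℕ) ∈ W := by
    refine extract_mem m (N+2) lam hlam0 hinj I0 W (fun t => xD t.1 (t.2 : ℕ)) ?_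
    intro i hi
    rw [← hDsum i hi]
    exact (hIs i (le_trans (le_max_right _ _) hi) g hgW).2
  refine ⟨?_, ?_, ?_⟩
  · -- t_k g
    have h1 := hxHW (k, (0 : Fin (N+1)))
    have heq : xH k ((0 : Fin (N+1)) : ℕ)
        = ∑ pq ∈ E, monST m pq.1 (Function.update pq.2 k (pq.2 k + 1)) ⊗ₜ[ℂ] v pq := by
      simp only [hxH, Fin.val_zero]
      refine Finset.sum_congr rfl fun pq _ => ?_
      rw [hCf]
      simp only [pow_zero, Nat.choose_zero_right, Nat.cast_one, mul_one, one_smul,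
        Nat.sub_zero, Function.update_eq_self]
    rw [← heq]
    exact h1
  · -- s_k g
    have h1 := hxDW (k, (0 : Fin (N+2)))
    have heq : xD k ((0 : Fin (N+2)) : ℕ)
        = ∑ pq ∈ E, monST m (Function.update pq.1 k (pq.1 k + 1)) pq.2 ⊗ₜ[ℂ] v pq := by
      simp only [hxD, Fin.val_zero]
      refine Finset.sum_congr rfl fun pq _ => ?_
      rw [dCf, hCf]
      simp
    rw [← heq]
    exact h1
  · -- top-degree part
    set Pk : ℕ := E.sup (fun pq' => pq'.1 k) with hPk
    have hPkN : Pk ≤ N := by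
      refine Finset.sup_mono_fun fun pq hpq => ?_
      exact Finset.le_sup (Finset.mem_univ k)
    have h1 : xH k Pk ∈ W := hxHW (k, (⟨Pk, by omega⟩ : Fin (N+1)))
    have heq : (∑ pq ∈ E.filter (fun pq => pq.1 k = Pk),
        monST m (Function.update pq.1 k 0) (Function.update pq.2 k (pq.2 k + 1)) ⊗ₜ[ℂ] v pq)
        = ((-1 : ℂ) ^ Pk) • xH k Pk := by
      simp only [hxH]
      rw [Finset.smul_sum, Finset.sum_filter]
      refine Finset.sum_congr rfl fun pq hpq => ?_
      rw [smul_smul, hCf, ← mul_assoc, ← pow_add, Even.neg_one_pow ⟨Pk, rfl⟩, one_mul]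
      by_cases h : pq.1 k = Pk
      · rw [if_pos h, h, Nat.choose_self, Nat.cast_one, one_smul, Nat.sub_self]
      · have hle : pq.1 k ≤ Pk :=
          Finset.le_sup (f := fun pq' : (Fin m → ℕ) × (Fin m → ℕ) => pq'.1 k) hpq
        rw [if_neg h, Nat.choose_eq_zero_of_lt (lt_of_le_of_ne hle h), Nat.cast_zero, zero_smul]
    rw [heq]
    exact Submodule.smul_mem W _ h1
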